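/- Let v: ℝ → ℝ be a smooth function and x₀ ∈ ℝ a point with v(x₀) > 0. Then for every integer s ≥ 0, the limit as λ → v(x₀)² from below of (λ − v(x₀)²)^{s+1} · K^s(x₀, λ) exists and equals −((2s+1)!!/2^s) · (2v(x₀))^{s−1} · (v′(x₀))^s. (This is the one-dimensional instance of the lemma that K^{γ,s} is rational in λ with poles of order s+1 at the canonical coordinates, with highest-pole coefficient −((2s+1)!!/2^s)·ψ_i^γ·√(h_i)·(u_{i,x})^s.) -/

import Mathlib

open Filter

/-- The odd double factorial: `oddDF k = (2k-1)!! = 1 * 3 * ⋯ * (2k-1)`,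
with the convention `oddDF 0 = (-1)!! = 1`. -/
def oddDF (k : ℕ) : ℕ := ∏ i ∈ Finset.range k, (2 * i + 1)

/-- The coefficient functions `K^s(x, λ)` of the loop equation of the one-dimensional
generalized Frobenius manifold with potential `F = v⁴/12`. -/
noncomputable def Kcoef (v : ℝ → ℝ) (s : ℕ) (x lam : ℝ) : ℝ :=
  iteratedDeriv s (fun y => 1 / (2 * v y * ((v y) ^ 2 - lam))) x
    + (s : ℝ) * iteratedDeriv s
        (fun y => (1 / (2 * lam)) * (((v y) ^ 2 - lam) ^ (-(1 / 2 : ℝ)) - 1 / v y)) x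
    + ∑ k ∈ Finset.Icc 1 s,
        (Nat.choose s k : ℝ)
          * iteratedDeriv (k - 1)
              (fun y => (1 / (2 * lam)) * (v y * ((v y) ^ 2 - lam) ^ (-(1 / 2 : ℝ)) - 1)) x
          * iteratedDeriv (s + 1 - k)
              (fun y => ((v y) ^ 2 - lam) ^ (-(1 / 2 : ℝ))) x

namespace HPC
noncomputable section
open Finset
open scoped ContDiff

def DD (b j : ℕ) : ℝ := ∏ i ∈ Finset.range j, ((b : ℝ) + 2 * i)

@[simp] lemma DD_zero (b : ℕ) : DD b 0 = 1 := by simp [DD]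

lemma DD_succ (b j : ℕ) : DD b (j+1) = DD b j * ((b:ℝ) + 2*j) := Finset.prod_range_succ _ _

lemma DD_succ' (b j : ℕ) : DD b (j+1) = (b:ℝ) * DD (b+2) j := by
  rw [DD, Finset.prod_range_succ', DD]
  push_cast
  rw [Finset.prod_congr rfl (fun i (_ : i ∈ range j) =>
    show ((b:ℝ) + 2*((i:ℝ)+1)) = ((b:ℝ)+2+2*(i:ℝ)) by ring)]
  ring

lemma DD_conv : ∀ (s a b : ℕ),
    ∑ j ∈ range (s+1), (s.choose j : ℝ) * DD a j * DD b (s - j) = DD (a+b) s := by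
  intro s
  induction s with
  | zero => intro a b; simp
  | succ s IH =>
    intro a b
    have step1 : ∀ j ∈ range (s+1),
        ((s+1).choose (j+1) : ℝ) * DD a (j+1) * DD b (s+1 - (j+1))
          = (s.choose j : ℝ) * ((a:ℝ) + 2*j) * (DD a j * DD b (s - j))
            + (s.choose (j+1) : ℝ) * DD a (j+1) * DD b (s - j) := by
      intro j hj
      rw [Nat.succ_sub_succ, Nat.choose_succ_succ, DD_succ]
      push_cast; ring
    rw [Finset.sum_range_succ' (fun j => ((s+1).choose j : ℝ) * DD a j * DD b (s+1 - j)) (s+1)]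
    rw [Finset.sum_congr rfl step1, Finset.sum_add_distrib]
    have step2 : (∑ j ∈ range (s+1), (s.choose (j+1) : ℝ) * DD a (j+1) * DD b (s - j))
          + ((s+1).choose 0 : ℝ) * DD a 0 * DD b (s+1 - 0)
        = ∑ j ∈ range (s+1), (s.choose j : ℝ) * DD a j * DD b (s+1 - j) := by
      have h := Finset.sum_range_succ' (fun j => (s.choose j : ℝ) * DD a j * DD b (s+1 - j)) (s+1)
      rw [Finset.sum_range_succ (fun j => (s.choose j : ℝ) * DD a j * DD b (s+1 - j)) (s+1)] at h
      simp only [Nat.choose_succ_self, Nat.cast_zero, zero_mul, add_zero, Nat.succ_sub_succ] at h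
      rw [h]
      norm_num
    rw [add_assoc, step2]
    have step3 : ∀ j ∈ range (s+1),
        (s.choose j : ℝ) * DD a j * DD b (s+1 - j)
          = (s.choose j : ℝ) * ((b:ℝ) + 2*((s:ℝ) - j)) * (DD a j * DD b (s - j)) := by
      intro j hj
      rw [mem_range] at hj
      have hj' : j ≤ s := Nat.lt_succ_iff.mp hj
      have : s + 1 - j = (s - j) + 1 := by omega
      rw [this, DD_succ]
      have : ((s - j : ℕ) : ℝ) = (s:ℝ) - j := by
        rw [Nat.cast_sub hj']
      rw [this]; ring
    rw [Finset.sum_congr rfl step3, ← Finset.sum_add_distrib]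
    have step4 : ∀ j ∈ range (s+1),
        (s.choose j : ℝ) * ((a:ℝ) + 2*j) * (DD a j * DD b (s - j))
          + (s.choose j : ℝ) * ((b:ℝ) + 2*((s:ℝ) - j)) * (DD a j * DD b (s - j))
        = ((a:ℝ) + (b:ℝ) + 2*s) * ((s.choose j : ℝ) * DD a j * DD b (s - j)) := by
      intro j _; ring
    rw [Finset.sum_congr rfl step4, ← Finset.mul_sum, IH a b, DD_succ]
    push_cast; ring

lemma DD_W : ∀ (s b : ℕ),
    (∑ j ∈ range s, (s.choose (j+1) : ℝ) * DD 1 j * DD (b+1) (s - (j+1))) + DD b s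
      = DD (b+1) s := by
  intro s
  induction s with
  | zero => intro b; simp
  | succ s IH =>
    intro b
    have step1 : ∀ j ∈ range (s+1),
        ((s+1).choose (j+1) : ℝ) * DD 1 j * DD (b+1) (s+1 - (j+1))
          = (s.choose j : ℝ) * DD 1 j * DD (b+1) (s - j)
            + (s.choose (j+1) : ℝ) * DD 1 j * DD (b+1) (s - j) := by
      intro j hj
      rw [Nat.succ_sub_succ, Nat.choose_succ_succ]
      push_cast; ring
    rw [Finset.sum_congr rfl step1, Finset.sum_add_distrib]
    have conv1 : ∑ j ∈ range (s+1), (s.choose j : ℝ) * DD 1 j * DD (b+1) (s - j)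
        = DD (b+2) s := by
      have := DD_conv s 1 (b+1); rw [show 1 + (b+1) = b+2 by omega] at this; exact this
    have second : ∑ j ∈ range (s+1), (s.choose (j+1) : ℝ) * DD 1 j * DD (b+1) (s - j)
        = ((b:ℝ)+1) * (∑ j ∈ range s, (s.choose (j+1) : ℝ) * DD 1 j * DD (b+3) (s - (j+1))) := by
      rw [Finset.sum_range_succ]
      simp only [Nat.choose_succ_self, Nat.cast_zero, zero_mul, add_zero]
      rw [Finset.mul_sum]
      refine Finset.sum_congr rfl fun j hj => ?_
      rw [mem_range] at hj
      have : s - j = (s - (j+1)) + 1 := by omega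
      rw [this, DD_succ']
      rw [show b+1+2 = b+3 by omega]
      push_cast; ring
    have IH2 := IH (b+2)
    rw [show b+2+1 = b+3 by omega] at IH2
    have hb : DD b (s+1) = (b:ℝ) * DD (b+2) s := DD_succ' b s
    have hg : DD (b+1) (s+1) = ((b:ℝ)+1) * DD (b+3) s := by
      have := DD_succ' (b+1) s
      rw [show b+1+2 = b+3 by omega] at this
      push_cast at this ⊢; linarith [this]
    rw [conv1, second, hb, hg]
    nlinarith [IH2]

lemma oddDF_eq (n : ℕ) : (oddDF n : ℝ) = DD 1 n := by
  rw [oddDF, DD]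
  push_cast
  exact Finset.prod_congr rfl fun i _ => by ring

lemma DD_two (s : ℕ) : DD 2 s = 2^s * (s.factorial : ℝ) := by
  induction s with
  | zero => simp
  | succ s IH => rw [DD_succ, IH, Nat.factorial_succ]; push_cast; ring

lemma DD_three (s : ℕ) : DD 3 s = DD 1 (s+1) := by
  rw [DD_succ' 1 s]; norm_num

lemma keyIdent (s : ℕ) : (oddDF (s+1) : ℝ) =
    2^s * (s.factorial : ℝ)
      + ∑ k ∈ Finset.Icc 1 s, (s.choose k : ℝ) * (oddDF (k-1) : ℝ) * (oddDF (s+1-k) : ℝ) := by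
  have W := DD_W s 2
  rw [show (2:ℕ)+1 = 3 by omega] at W
  have icc : ∑ k ∈ Finset.Icc 1 s, (s.choose k : ℝ) * (oddDF (k-1) : ℝ) * (oddDF (s+1-k) : ℝ)
      = ∑ j ∈ range s, (s.choose (j+1) : ℝ) * DD 1 j * DD 3 (s - (j+1)) := by
    rw [← Finset.Ico_add_one_right_eq_Icc, Finset.sum_Ico_eq_sum_range]
    refine Finset.sum_congr rfl fun j hj => ?_
    rw [mem_range] at hj
    rw [show 1 + j = j + 1 by omega, Nat.add_sub_cancel, oddDF_eq, oddDF_eq,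
      show s + 1 - (j+1) = (s - (j+1)) + 1 by omega, ← DD_three]
  rw [icc, oddDF_eq, ← DD_three, ← W, DD_two]
  ring


variable {a w' b u f : ℝ → ℝ} {r lam : ℝ}

noncomputable def Acoef (a w' : ℝ → ℝ) (r : ℝ) : ℕ → ℕ → ℝ → ℝ
  | 0, 0 => a
  | 0, _+1 => fun _ => 0
  | n+1, 0 => deriv (Acoef a w' r n 0)
  | n+1, m+1 => fun y =>
      deriv (Acoef a w' r n (m+1)) y + (r - m) * w' y * Acoef a w' r n m y

lemma Acoef_contDiff (ha : ContDiff ℝ ∞ a) (hw : ContDiff ℝ ∞ w') :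
    ∀ n m, ContDiff ℝ ∞ (Acoef a w' r n m) := by
  intro n
  induction n with
  | zero => intro m; cases m with
    | zero => exact ha
    | succ m => exact contDiff_const
  | succ n IH =>
    intro m
    cases m with
    | zero => exact (contDiff_infty_iff_deriv.mp (IH 0)).2
    | succ m =>
      exact ((contDiff_infty_iff_deriv.mp (IH (m+1))).2).add
        ((contDiff_const.mul hw).mul (IH m))

lemma Acoef_vanish : ∀ n m, n < m → Acoef a w' r n m = fun _ => 0 := by
  intro n
  induction n with
  | zero => intro m hm
            match m, hm with
            | m+1, _ => rfl
  | succ n IH =>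
    intro m hm
    match m, hm with
    | m+1, hm =>
      have h1 : Acoef a w' r n (m+1) = fun _ => 0 := IH (m+1) (by omega)
      have h2 : Acoef a w' r n m = fun _ => 0 := IH m (by omega)
      funext y
      show deriv (Acoef a w' r n (m+1)) y + (r - m) * w' y * Acoef a w' r n m y = 0
      rw [h1, h2]
      simp

lemma Acoef_diag : ∀ n, Acoef a w' r n n
    = fun y => (∏ i ∈ range n, (r - i)) * a y * (w' y)^n := by
  intro n
  induction n with
  | zero => funext y; simp [Acoef]
  | succ n IH =>
    funext y
    show deriv (Acoef a w' r n (n+1)) y + (r - n) * w' y * Acoef a w' r n n y = _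
    rw [Acoef_vanish n (n+1) (by omega), IH]
    simp only [deriv_const']
    rw [Finset.prod_range_succ]
    push_cast
    ring

lemma repr_lemma (hu : ContDiff ℝ ∞ u) (ha : ContDiff ℝ ∞ a) (hb : ContDiff ℝ ∞ b)
    (hf : ∀ y, lam < u y ^ 2 → f y = b y + a y * (u y ^ 2 - lam) ^ r) :
    ∀ n y, lam < u y ^ 2 → iteratedDeriv n f y
      = iteratedDeriv n b y + ∑ m ∈ range (n+1),
          Acoef a (fun z => 2 * u z * deriv u z) r n m y * (u y ^ 2 - lam) ^ (r - m) := by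
  set w' : ℝ → ℝ := fun z => 2 * u z * deriv u z with hw'def
  have hw : ContDiff ℝ ∞ w' :=
    (contDiff_const.mul hu).mul (contDiff_infty_iff_deriv.mp hu).2
  have hUopen : IsOpen {z : ℝ | lam < u z ^ 2} :=
    isOpen_lt continuous_const (hu.continuous.pow 2)
  intro n
  induction n with
  | zero =>
    intro y hy
    simpa [iteratedDeriv_zero, Acoef] using hf y hy
  | succ n IH =>
    intro y hy
    have hg : (0:ℝ) < u y ^ 2 - lam := sub_pos.mpr hy
    have hmem : {z : ℝ | lam < u z ^ 2} ∈ nhds y := hUopen.mem_nhds hy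
    have hEq : iteratedDeriv n f =ᶠ[nhds y]
        (fun z => iteratedDeriv n b z + ∑ m ∈ range (n+1),
          Acoef a w' r n m z * (u z ^ 2 - lam) ^ (r - m)) :=
      Filter.eventually_of_mem hmem (fun z hz => IH z hz)
    rw [iteratedDeriv_succ, hEq.deriv_eq]
    -- derivative of each ingredient
    have hbd : HasDerivAt (iteratedDeriv n b) (iteratedDeriv (n+1) b y) y := by
      have hd : DifferentiableAt ℝ (iteratedDeriv n b) y :=
        (hb.differentiable_iteratedDeriv n (by exact_mod_cast WithTop.coe_lt_top _)).differentiableAt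
      rw [iteratedDeriv_succ]
      exact hd.hasDerivAt
    have hud : HasDerivAt u (deriv u y) y :=
      (hu.differentiable (by simp)).differentiableAt.hasDerivAt
    have hgd : HasDerivAt (fun z => u z ^ 2 - lam) (w' y) y := by
      have := (hud.pow 2).sub_const lam
      simpa [hw'def, pow_one, mul_comm, mul_assoc] using this
    have hterm : ∀ m ∈ range (n+1),
        HasDerivAt (fun z => Acoef a w' r n m z * (u z ^ 2 - lam) ^ (r - m))
          (deriv (Acoef a w' r n m) y * (u y ^ 2 - lam) ^ (r - m)
            + Acoef a w' r n m y
              * ((r - m) * (u y ^ 2 - lam) ^ (r - m - 1) * w' y)) y := by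
      intro m _
      have hA : HasDerivAt (Acoef a w' r n m) (deriv (Acoef a w' r n m) y) y :=
        ((Acoef_contDiff ha hw n m).differentiable
          (by simp)).differentiableAt.hasDerivAt
      have h2 := hA.fun_mul (hgd.rpow_const (p := r - m) (Or.inl (ne_of_gt hg)))
      exact h2.congr_deriv (by ring)
    have htot : HasDerivAt (fun z => iteratedDeriv n b z + ∑ m ∈ range (n+1),
          Acoef a w' r n m z * (u z ^ 2 - lam) ^ (r - m))
        (iteratedDeriv (n+1) b y + ∑ m ∈ range (n+1),
          (deriv (Acoef a w' r n m) y * (u y ^ 2 - lam) ^ (r - m)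
            + Acoef a w' r n m y
              * ((r - m) * (u y ^ 2 - lam) ^ (r - m - 1) * w' y))) y :=
      hbd.add (HasDerivAt.fun_sum hterm)
    rw [htot.deriv]
    congr 1
    -- now the sum rearrangement
    rw [Finset.sum_range_succ' (fun m => Acoef a w' r (n+1) m y * (u y ^ 2 - lam) ^ (r - m)) (n+1)]
    have hA0 : Acoef a w' r (n+1) 0 y = deriv (Acoef a w' r n 0) y := rfl
    have hAs : ∀ m, Acoef a w' r (n+1) (m+1) y
        = deriv (Acoef a w' r n (m+1)) y + (r - m) * w' y * Acoef a w' r n m y := fun m => rfl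
    have expand : ∀ m ∈ range (n+1),
        Acoef a w' r (n+1) (m+1) y * (u y ^ 2 - lam) ^ (r - (m+1:ℕ))
          = deriv (Acoef a w' r n (m+1)) y * (u y ^ 2 - lam) ^ (r - (m+1:ℕ))
            + Acoef a w' r n m y * ((r - m) * (u y ^ 2 - lam) ^ (r - m - 1) * w' y) := by
      intro m _
      rw [hAs m]
      have : (r - (m+1:ℕ)) = r - m - 1 := by push_cast; ring
      rw [this]
      ring
    rw [Finset.sum_congr rfl expand, Finset.sum_add_distrib]
    have first : (∑ m ∈ range (n+1),
          deriv (Acoef a w' r n (m+1)) y * (u y ^ 2 - lam) ^ (r - (m+1:ℕ)))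
        + Acoef a w' r (n+1) 0 y * (u y ^ 2 - lam) ^ (r - (0:ℕ))
        = ∑ m ∈ range (n+1), deriv (Acoef a w' r n m) y * (u y ^ 2 - lam) ^ (r - m) := by
      rw [hA0]
      have h := Finset.sum_range_succ'
        (fun m => deriv (Acoef a w' r n m) y * (u y ^ 2 - lam) ^ (r - m)) (n+1)
      rw [Finset.sum_range_succ
        (fun m => deriv (Acoef a w' r n m) y * (u y ^ 2 - lam) ^ (r - m)) (n+1)] at h
      rw [Acoef_vanish n (n+1) (by omega)] at h
      simp only [deriv_const', zero_mul, add_zero] at h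
      rw [← h]
    rw [Finset.sum_add_distrib]
    linarith [first]


lemma mul_sum_helper {ι : Type*} (X : ℝ) (t : Finset ι) (a e : ι → ℝ) :
    ∑ i ∈ t, a i * (X * e i) = X * ∑ i ∈ t, a i * e i := by
  rw [Finset.mul_sum]
  exact Finset.sum_congr rfl fun i _ => by ring

lemma tendsto_sub_rpow (c t : ℝ) (ht : 0 < t) :
    Tendsto (fun lam => (c - lam) ^ t) (nhdsWithin c (Set.Iio c)) (nhds 0) := by
  have h0 : Tendsto (fun lam : ℝ => c - lam) (nhdsWithin c (Set.Iio c))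
      (nhdsWithin 0 (Set.Ioi 0)) := by
    rw [tendsto_nhdsWithin_iff]
    constructor
    · have h1 : Tendsto (fun lam : ℝ => c - lam) (nhds c) (nhds (c - c)) :=
        ((continuous_const.sub continuous_id).tendsto c)
      rw [sub_self] at h1
      exact h1.mono_left nhdsWithin_le_nhds
    · exact eventually_mem_nhdsWithin.mono fun lam hlam => Set.mem_Ioi.mpr (sub_pos.mpr hlam)
  have hc : ContinuousAt (fun e : ℝ => e ^ t) 0 := Real.continuousAt_rpow_const 0 t (Or.inr ht.le)
  have h2 := hc.tendsto
  rw [Real.zero_rpow (ne_of_gt ht)] at h2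
  have h3 := (h2.mono_left (nhdsWithin_le_nhds (s := Set.Ioi 0))).comp h0
  simpa [Function.comp_def] using h3

lemma core_tendsto (c : ℝ) (n : ℕ) (t : ℝ) (h : 0 ≤ (n:ℝ) + 1 + t) :
    Tendsto (fun lam => (lam - c)^(n+1) * (c - lam) ^ t) (nhdsWithin c (Set.Iio c))
      (nhds (if (n:ℝ) + 1 + t = 0 then (-1:ℝ)^(n+1) else 0)) := by
  have hev : (fun lam => (-1:ℝ)^(n+1) * (c - lam) ^ ((n:ℝ) + 1 + t)) =ᶠ[nhdsWithin c (Set.Iio c)]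
      (fun lam => (lam - c)^(n+1) * (c - lam) ^ t) := by
    filter_upwards [eventually_mem_nhdsWithin] with lam hlam
    have hpos : (0:ℝ) < c - lam := sub_pos.mpr hlam
    have h2 : (c - lam) ^ ((n:ℝ) + 1 + t) = (c - lam)^(n+1) * (c - lam) ^ t := by
      rw [← Real.rpow_natCast (c - lam) (n+1), ← Real.rpow_add hpos]
      congr 1
      push_cast; ring
    have h1 : lam - c = -(c - lam) := by ring
    rw [h2, h1, neg_pow (c - lam)]
    ring
  refine Tendsto.congr' hev ?_
  by_cases h0 : (n:ℝ) + 1 + t = 0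
  · rw [if_pos h0, h0]
    simp only [Real.rpow_zero, mul_one]
    exact tendsto_const_nhds
  · rw [if_neg h0]
    have ht : 0 < (n:ℝ) + 1 + t := h.lt_of_ne (Ne.symm h0)
    have := (tendsto_sub_rpow c _ ht).const_mul ((-1:ℝ)^(n+1))
    simpa using this

/-- Piece 1 limit. -/
lemma tendsto_main_sum (c : ℝ) (n : ℕ) (p : ℕ → ℝ) :
    Tendsto (fun lam => (lam - c)^(n+1) * ∑ m ∈ range (n+1), p m * (c - lam) ^ ((-1:ℝ) - m))
      (nhdsWithin c (Set.Iio c)) (nhds ((-1:ℝ)^(n+1) * p n)) := by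
  have hfe : ∀ lam : ℝ, (lam - c)^(n+1) * ∑ m ∈ range (n+1), p m * (c - lam) ^ ((-1:ℝ) - m)
      = ∑ m ∈ range (n+1), p m * ((lam - c)^(n+1) * (c - lam) ^ ((-1:ℝ) - m)) := by
    intro lam
    rw [mul_sum_helper]
  have hterm : ∀ m ∈ range (n+1),
      Tendsto (fun lam => p m * ((lam - c)^(n+1) * (c - lam) ^ ((-1:ℝ) - m)))
        (nhdsWithin c (Set.Iio c))
        (nhds (p m * (if (n:ℝ) + 1 + ((-1:ℝ) - m) = 0 then (-1:ℝ)^(n+1) else 0))) := by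
    intro m hm
    have hmn : (m:ℝ) ≤ n := by exact_mod_cast Nat.lt_succ_iff.mp (mem_range.mp hm)
    exact (core_tendsto c n ((-1:ℝ) - m) (by linarith)).const_mul (p m)
  have hsum := tendsto_finset_sum (range (n+1)) hterm
  have hval : ∑ m ∈ range (n+1),
      p m * (if (n:ℝ) + 1 + ((-1:ℝ) - m) = 0 then (-1:ℝ)^(n+1) else 0)
      = (-1:ℝ)^(n+1) * p n := by
    rw [Finset.sum_range_succ]
    have h1 : ∑ m ∈ range n,
        p m * (if (n:ℝ) + 1 + ((-1:ℝ) - m) = 0 then (-1:ℝ)^(n+1) else 0) = 0 := by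
      refine Finset.sum_eq_zero fun m hm => ?_
      have hmn : (m:ℝ) < n := by exact_mod_cast mem_range.mp hm
      rw [if_neg (by intro hcon; linarith)]
      ring
    rw [h1, if_pos (by push_cast; ring)]
    ring
  rw [← hval]
  exact Tendsto.congr (fun lam => (hfe lam).symm) hsum

lemma tendsto_factor (c : ℝ) (hc : c ≠ 0) (Cf : ℝ) :
    Tendsto (fun lam : ℝ => Cf * (1/(2*lam))) (nhdsWithin c (Set.Iio c))
      (nhds (Cf * (1/(2*c)))) := by
  have h : ContinuousAt (fun lam : ℝ => Cf * (1/(2*lam))) c := by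
    have h2 : (2:ℝ) * c ≠ 0 := by simpa using hc
    exact continuousAt_const.mul (continuousAt_const.div
      (continuous_const.mul continuous_id).continuousAt h2)
  exact h.tendsto.mono_left nhdsWithin_le_nhds

lemma tendsto_pow_zero (c : ℝ) (n : ℕ) :
    Tendsto (fun lam : ℝ => (lam - c)^(n+1)) (nhdsWithin c (Set.Iio c)) (nhds 0) := by
  have hcont : Continuous (fun lam : ℝ => (lam - c)^(n+1)) :=
    (continuous_id.sub continuous_const).pow (n+1)
  have h := (hcont.tendsto c).mono_left (nhdsWithin_le_nhds (s := Set.Iio c))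
  simpa using h

/-- Piece 2 limit (everything vanishes). -/
lemma tendsto_half_sum (c : ℝ) (hc : c ≠ 0) (n N : ℕ) (hN : N ≤ n + 1) (d Cf : ℝ) (p : ℕ → ℝ) :
    Tendsto (fun lam => (lam - c)^(n+1) * (Cf * ((1/(2*lam))
        * (d + ∑ m ∈ range N, p m * (c - lam) ^ (-(1/2:ℝ) - m)))))
      (nhdsWithin c (Set.Iio c)) (nhds 0) := by
  have hfe : ∀ lam : ℝ, (lam - c)^(n+1) * (Cf * ((1/(2*lam))
        * (d + ∑ m ∈ range N, p m * (c - lam) ^ (-(1/2:ℝ) - m))))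
      = (Cf * (1/(2*lam))) * ((lam - c)^(n+1) * d
          + ∑ m ∈ range N, p m * ((lam - c)^(n+1) * (c - lam) ^ (-(1/2:ℝ) - m))) := by
    intro lam
    rw [mul_sum_helper]
    ring
  have hterm : ∀ m ∈ range N,
      Tendsto (fun lam => p m * ((lam - c)^(n+1) * (c - lam) ^ (-(1/2:ℝ) - m)))
        (nhdsWithin c (Set.Iio c)) (nhds 0) := by
    intro m hm
    have hmn : (m:ℝ) ≤ n := by
      have h3 : m ≤ n := by have := mem_range.mp hm; omega
      exact_mod_cast h3
    have hcore := core_tendsto c n (-(1/2:ℝ) - m) (by linarith)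
    rw [if_neg (by intro hcon; linarith)] at hcore
    simpa using hcore.const_mul (p m)
  have h2 : Tendsto (fun lam => ∑ m ∈ range N,
      p m * ((lam - c)^(n+1) * (c - lam) ^ (-(1/2:ℝ) - m)))
      (nhdsWithin c (Set.Iio c)) (nhds 0) := by
    simpa using tendsto_finset_sum (range N) hterm
  have h1 : Tendsto (fun lam : ℝ => (lam - c)^(n+1) * d) (nhdsWithin c (Set.Iio c)) (nhds 0) := by
    simpa using (tendsto_pow_zero c n).mul_const d
  have hbr := h1.add h2
  rw [add_zero] at hbr
  have := (tendsto_factor c hc Cf).mul hbr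
  rw [mul_zero] at this
  exact Tendsto.congr (fun lam => (hfe lam).symm) this

/-- Piece 3 limit. -/
lemma tendsto_prod_piece (c : ℝ) (hc : c ≠ 0) (n K' M' : ℕ) (hKM : K' + M' = n)
    (d Cf : ℝ) (p q : ℕ → ℝ) :
    Tendsto (fun lam => (lam - c)^(n+1) * (Cf * ((1/(2*lam))
        * (d + ∑ m ∈ range (K'+1), p m * (c - lam) ^ (-(1/2:ℝ) - m)))
        * (∑ m ∈ range (M'+1), q m * (c - lam) ^ (-(1/2:ℝ) - m))))
      (nhdsWithin c (Set.Iio c))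
      (nhds ((Cf * (1/(2*c))) * ((-1:ℝ)^(n+1) * (p K' * q M')))) := by
  have hfe : ∀ lam : ℝ, lam < c → (lam - c)^(n+1) * (Cf * ((1/(2*lam))
        * (d + ∑ m ∈ range (K'+1), p m * (c - lam) ^ (-(1/2:ℝ) - m)))
        * (∑ m ∈ range (M'+1), q m * (c - lam) ^ (-(1/2:ℝ) - m)))
      = (Cf * (1/(2*lam))) * ((∑ m' ∈ range (M'+1),
            (d * q m') * ((lam - c)^(n+1) * (c - lam) ^ (-(1/2:ℝ) - m')))
          + ∑ m ∈ range (K'+1), ∑ m' ∈ range (M'+1),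
            (p m * q m') * ((lam - c)^(n+1) * (c - lam) ^ ((-1:ℝ) - (m + m' : ℕ)))) := by
    intro lam hlam
    have hpos : (0:ℝ) < c - lam := sub_pos.mpr hlam
    have hprod : (∑ m ∈ range (K'+1), p m * (c - lam) ^ (-(1/2:ℝ) - m))
          * (∑ m' ∈ range (M'+1), q m' * (c - lam) ^ (-(1/2:ℝ) - m'))
        = ∑ m ∈ range (K'+1), ∑ m' ∈ range (M'+1),
            (p m * q m') * (c - lam) ^ ((-1:ℝ) - (m + m' : ℕ)) := by
      rw [Finset.sum_mul_sum]
      refine Finset.sum_congr rfl fun m _ => Finset.sum_congr rfl fun m' _ => ?_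
      have hra : (c - lam) ^ (-(1/2:ℝ) - m) * (c - lam) ^ (-(1/2:ℝ) - m')
          = (c - lam) ^ ((-1:ℝ) - (m + m' : ℕ)) := by
        rw [← Real.rpow_add hpos]
        congr 1
        push_cast; ring
      calc p m * (c - lam) ^ (-(1/2:ℝ) - m) * (q m' * (c - lam) ^ (-(1/2:ℝ) - m'))
          = p m * q m' * ((c - lam) ^ (-(1/2:ℝ) - m) * (c - lam) ^ (-(1/2:ℝ) - m')) := by ring
        _ = _ := by rw [hra]
    rw [mul_sum_helper]
    have hdb : ∀ m ∈ range (K'+1), ∑ m' ∈ range (M'+1),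
          (p m * q m') * ((lam - c)^(n+1) * (c - lam) ^ ((-1:ℝ) - (m + m' : ℕ)))
        = (lam - c)^(n+1) * ∑ m' ∈ range (M'+1),
            (p m * q m') * (c - lam) ^ ((-1:ℝ) - (m + m' : ℕ)) := by
      intro m _
      rw [mul_sum_helper]
    rw [Finset.sum_congr rfl hdb, ← Finset.mul_sum]
    have hq : ∑ m' ∈ range (M'+1), (d * q m') * (c - lam) ^ (-(1/2:ℝ) - m')
        = d * ∑ m' ∈ range (M'+1), q m' * (c - lam) ^ (-(1/2:ℝ) - m') := by
      rw [Finset.mul_sum]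
      exact Finset.sum_congr rfl fun m' _ => by ring
    rw [hq, ← hprod]
    ring
  -- limits of the right-hand side
  have hterm1 : ∀ m' ∈ range (M'+1),
      Tendsto (fun lam => (d * q m') * ((lam - c)^(n+1) * (c - lam) ^ (-(1/2:ℝ) - m')))
        (nhdsWithin c (Set.Iio c)) (nhds 0) := by
    intro m' hm'
    have hmn : (m':ℝ) ≤ n := by
      have h3 : m' ≤ n := by have := mem_range.mp hm'; omega
      exact_mod_cast h3
    have hcore := core_tendsto c n (-(1/2:ℝ) - m') (by linarith)
    rw [if_neg (by intro hcon; linarith)] at hcore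
    simpa using hcore.const_mul (d * q m')
  have h1 : Tendsto (fun lam => ∑ m' ∈ range (M'+1),
      (d * q m') * ((lam - c)^(n+1) * (c - lam) ^ (-(1/2:ℝ) - m')))
      (nhdsWithin c (Set.Iio c)) (nhds 0) := by
    simpa using tendsto_finset_sum (range (M'+1)) hterm1
  have hterm2 : ∀ m ∈ range (K'+1), ∀ m' ∈ range (M'+1),
      Tendsto (fun lam => (p m * q m') * ((lam - c)^(n+1) * (c - lam) ^ ((-1:ℝ) - (m + m' : ℕ))))
        (nhdsWithin c (Set.Iio c))
        (nhds ((p m * q m') * (if (n:ℝ) + 1 + ((-1:ℝ) - (m + m' : ℕ)) = 0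
          then (-1:ℝ)^(n+1) else 0))) := by
    intro m hm m' hm'
    have h3 : m + m' ≤ n := by
      have := mem_range.mp hm; have := mem_range.mp hm'; omega
    have h4 : ((m + m' : ℕ):ℝ) ≤ n := by exact_mod_cast h3
    exact (core_tendsto c n ((-1:ℝ) - (m + m' : ℕ)) (by linarith)).const_mul _
  have h2 : Tendsto (fun lam => ∑ m ∈ range (K'+1), ∑ m' ∈ range (M'+1),
      (p m * q m') * ((lam - c)^(n+1) * (c - lam) ^ ((-1:ℝ) - (m + m' : ℕ))))
      (nhdsWithin c (Set.Iio c))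
      (nhds (∑ m ∈ range (K'+1), ∑ m' ∈ range (M'+1),
        (p m * q m') * (if (n:ℝ) + 1 + ((-1:ℝ) - (m + m' : ℕ)) = 0
          then (-1:ℝ)^(n+1) else 0))) := by
    exact tendsto_finset_sum (range (K'+1)) fun m hm =>
      tendsto_finset_sum (range (M'+1)) (hterm2 m hm)
  have hval : ∑ m ∈ range (K'+1), ∑ m' ∈ range (M'+1),
      (p m * q m') * (if (n:ℝ) + 1 + ((-1:ℝ) - (m + m' : ℕ)) = 0
        then (-1:ℝ)^(n+1) else 0)
      = (-1:ℝ)^(n+1) * (p K' * q M') := by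
    have hzero : ∀ m m' : ℕ, m + m' < n →
        (p m * q m') * (if (n:ℝ) + 1 + ((-1:ℝ) - (m + m' : ℕ)) = 0
          then (-1:ℝ)^(n+1) else 0) = 0 := by
      intro m m' hlt
      have h4 : ((m + m' : ℕ):ℝ) < n := by exact_mod_cast hlt
      rw [if_neg (by intro hcon; linarith)]
      ring
    rw [Finset.sum_range_succ]
    have houter : ∑ m ∈ range K', ∑ m' ∈ range (M'+1),
        (p m * q m') * (if (n:ℝ) + 1 + ((-1:ℝ) - (m + m' : ℕ)) = 0
          then (-1:ℝ)^(n+1) else 0) = 0 := by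
      refine Finset.sum_eq_zero fun m hm => Finset.sum_eq_zero fun m' hm' => ?_
      exact hzero m m' (by have := mem_range.mp hm; have := mem_range.mp hm'; omega)
    rw [houter, zero_add, Finset.sum_range_succ]
    have hinner : ∑ m' ∈ range M',
        (p K' * q m') * (if (n:ℝ) + 1 + ((-1:ℝ) - (K' + m' : ℕ)) = 0
          then (-1:ℝ)^(n+1) else 0) = 0 := by
      refine Finset.sum_eq_zero fun m' hm' => ?_
      exact hzero K' m' (by have := mem_range.mp hm'; omega)
    rw [hinner, zero_add, if_pos (by push_cast [← hKM]; ring)]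
    ring
  rw [hval] at h2
  have hbr := h1.add h2
  rw [zero_add] at hbr
  have htot := (tendsto_factor c hc Cf).mul hbr
  refine Tendsto.congr' ?_ htot
  filter_upwards [eventually_mem_nhdsWithin] with lam hlam
  exact (hfe lam hlam).symm


lemma iteratedDeriv_congr_ev {f g : ℝ → ℝ} {x : ℝ} (h : f =ᶠ[nhds x] g) (n : ℕ) :
    iteratedDeriv n f x = iteratedDeriv n g x := by
  have H : ∀ n : ℕ, iteratedDeriv n f =ᶠ[nhds x] iteratedDeriv n g := by
    intro n
    induction n with
    | zero => simpa [iteratedDeriv_zero] using h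
    | succ n IH => rw [iteratedDeriv_succ, iteratedDeriv_succ]; exact IH.deriv
  exact (H n).eq_of_nhds

lemma iteratedDeriv_cmul (C : ℝ) (f : ℝ → ℝ) (n : ℕ) :
    iteratedDeriv n (fun y => C * f y) = fun x => C * iteratedDeriv n f x := by
  induction n with
  | zero => funext x; simp [iteratedDeriv_zero]
  | succ n IH =>
    rw [iteratedDeriv_succ, IH, iteratedDeriv_succ]
    funext x
    exact deriv_const_mul_field C

lemma iteratedDeriv_zero_fun (n : ℕ) : iteratedDeriv n (fun _ : ℝ => (0:ℝ)) = fun _ => 0 := by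
  induction n with
  | zero => rw [iteratedDeriv_zero]
  | succ n IH => rw [iteratedDeriv_succ, IH]; funext x; simp

lemma prod_neg_one (n : ℕ) : ∏ i ∈ range n, ((-1:ℝ) - i) = (-1:ℝ)^n * n.factorial := by
  induction n with
  | zero => simp
  | succ n IH => rw [Finset.prod_range_succ, IH, Nat.factorial_succ]; push_cast; ring

lemma oddDF_succ (n : ℕ) : oddDF (n+1) = oddDF n * (2*n+1) := Finset.prod_range_succ _ _

lemma prod_neg_half (n : ℕ) :
    ∏ i ∈ range n, (-(1/2:ℝ) - i) = (-1:ℝ)^n * (oddDF n : ℝ) / 2^n := by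
  induction n with
  | zero => simp [oddDF]
  | succ n IH =>
    rw [Finset.prod_range_succ, IH, oddDF_succ]
    push_cast
    field_simp
    ring

end
end HPC
open Finset HPC in
open scoped ContDiff in
theorem highest_pole_coefficient (v : ℝ → ℝ) (hv : ContDiff ℝ (⊤ : ℕ∞) v) (x₀ : ℝ)
    (hpos : 0 < v x₀) (s : ℕ) :
    Tendsto (fun lam : ℝ => (lam - (v x₀) ^ 2) ^ (s + 1) * Kcoef v s x₀ lam)
      (nhdsWithin ((v x₀) ^ 2) (Set.Iio ((v x₀) ^ 2)))
      (nhds (-(((oddDF (s + 1) : ℝ) / 2 ^ s)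
          * (2 * v x₀) ^ ((s : ℤ) - 1) * (deriv v x₀) ^ s))) := by
  classical
  have hv' : ContDiff ℝ ∞ v := hv.of_le (by simp)
  -- Construct a globally positive smooth function agreeing with v near x₀
  have hex : ∃ u : ℝ → ℝ, ContDiff ℝ ∞ u ∧ u =ᶠ[nhds x₀] v ∧ ∀ y, 0 < u y := by
    obtain ⟨δ, hδpos, hδ⟩ := Metric.continuousAt_iff.mp hv'.continuous.continuousAt (v x₀ / 2)
      (half_pos hpos)
    have hB : (δ/2 : ℝ) < δ := by linarith
    let B : ContDiffBump x₀ := ⟨δ/2, δ, by linarith, hB⟩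
    refine ⟨fun y => v x₀ + B y * (v y - v x₀), ?_, ?_, ?_⟩
    · exact contDiff_const.add (B.contDiff.mul (hv'.sub contDiff_const))
    · filter_upwards [B.eventuallyEq_one] with y hy
      simp only [Pi.one_apply] at hy
      rw [hy]; ring
    · intro y
      by_cases hy : dist y x₀ < δ
      · have h1 : |v y - v x₀| < v x₀ / 2 := by
          have := hδ hy
          rwa [Real.dist_eq] at this
        have h2 : (0:ℝ) ≤ B y := B.nonneg
        have h3 : B y ≤ 1 := B.le_one
        have h4 := (abs_lt.mp h1).1
        have h5 := (abs_lt.mp h1).2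
        have h6 : B y * (-(v x₀ / 2)) ≤ B y * (v y - v x₀) :=
          mul_le_mul_of_nonneg_left (le_of_lt h4) h2
        show 0 < v x₀ + B y * (v y - v x₀)
        nlinarith
      · have hB0 : B y = 0 := B.zero_of_le_dist (le_of_not_gt hy)
        show 0 < v x₀ + B y * (v y - v x₀)
        rw [hB0]
        simpa using hpos
  obtain ⟨u, hu_smooth, huv, hu_pos⟩ := hex
  have hux0 : u x₀ = v x₀ := huv.eq_of_nhds
  have hdux0 : deriv u x₀ = deriv v x₀ := huv.deriv_eq
  -- transfer Kcoef from v to u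
  have hK : ∀ lam, Kcoef v s x₀ lam = Kcoef u s x₀ lam := by
    intro lam
    have hvu : v =ᶠ[nhds x₀] u := huv.symm
    have e1 : (fun y => 1 / (2 * v y * ((v y) ^ 2 - lam))) =ᶠ[nhds x₀]
        (fun y => 1 / (2 * u y * ((u y) ^ 2 - lam))) :=
      hvu.mono fun y hy => by
        show 1 / (2 * v y * ((v y) ^ 2 - lam)) = 1 / (2 * u y * ((u y) ^ 2 - lam))
        rw [hy]
    have e2 : (fun y => (1 / (2 * lam)) * (((v y) ^ 2 - lam) ^ (-(1 / 2 : ℝ)) - 1 / v y))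
        =ᶠ[nhds x₀]
        (fun y => (1 / (2 * lam)) * (((u y) ^ 2 - lam) ^ (-(1 / 2 : ℝ)) - 1 / u y)) :=
      hvu.mono fun y hy => by
        show (1 / (2 * lam)) * (((v y) ^ 2 - lam) ^ (-(1 / 2 : ℝ)) - 1 / v y)
          = (1 / (2 * lam)) * (((u y) ^ 2 - lam) ^ (-(1 / 2 : ℝ)) - 1 / u y)
        rw [hy]
    have e3 : (fun y => (1 / (2 * lam)) * (v y * ((v y) ^ 2 - lam) ^ (-(1 / 2 : ℝ)) - 1))
        =ᶠ[nhds x₀]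
        (fun y => (1 / (2 * lam)) * (u y * ((u y) ^ 2 - lam) ^ (-(1 / 2 : ℝ)) - 1)) :=
      hvu.mono fun y hy => by
        show (1 / (2 * lam)) * (v y * ((v y) ^ 2 - lam) ^ (-(1 / 2 : ℝ)) - 1)
          = (1 / (2 * lam)) * (u y * ((u y) ^ 2 - lam) ^ (-(1 / 2 : ℝ)) - 1)
        rw [hy]
    have e4 : (fun y => ((v y) ^ 2 - lam) ^ (-(1 / 2 : ℝ))) =ᶠ[nhds x₀]
        (fun y => ((u y) ^ 2 - lam) ^ (-(1 / 2 : ℝ))) :=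
      hvu.mono fun y hy => by
        show ((v y) ^ 2 - lam) ^ (-(1 / 2 : ℝ)) = ((u y) ^ 2 - lam) ^ (-(1 / 2 : ℝ))
        rw [hy]
    unfold Kcoef
    rw [iteratedDeriv_congr_ev e1 s, iteratedDeriv_congr_ev e2 s]
    congr 1
    refine Finset.sum_congr rfl fun k _ => ?_
    rw [iteratedDeriv_congr_ev e3 (k-1), iteratedDeriv_congr_ev e4 (s+1-k)]
  -- local data
  set w' : ℝ → ℝ := fun z => 2 * u z * deriv u z with hwdef
  set a1 : ℝ → ℝ := fun y => 1 / (2 * u y) with ha1def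
  set b2 : ℝ → ℝ := fun y => -(1 / u y) with hb2def
  have ha1 : ContDiff ℝ ∞ a1 := by
    rw [ha1def]
    exact contDiff_const.div (contDiff_const.mul hu_smooth) fun y => by
      have := hu_pos y; positivity
  have hb2 : ContDiff ℝ ∞ b2 := by
    rw [hb2def]
    exact (contDiff_const.div hu_smooth fun y => (hu_pos y).ne').neg
  set P1 : ℕ → ℝ := fun m => Acoef a1 w' (-1) s m x₀ with hP1def
  set P2 : ℕ → ℝ := fun m => Acoef (fun _ => (1:ℝ)) w' (-(1/2:ℝ)) s m x₀ with hP2def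
  set P3 : ℕ → ℕ → ℝ := fun k m => Acoef u w' (-(1/2:ℝ)) (k-1) m x₀ with hP3def
  set P4 : ℕ → ℕ → ℝ := fun k m => Acoef (fun _ => (1:ℝ)) w' (-(1/2:ℝ)) (s+1-k) m x₀ with hP4def
  set cb : ℝ := iteratedDeriv s b2 x₀ with hcbdef
  set db : ℕ → ℝ := fun k => iteratedDeriv (k-1) (fun _ : ℝ => (-1:ℝ)) x₀ with hdbdef
  have hc0 : (0:ℝ) < v x₀ ^ 2 := by positivity
  -- the representation of Kcoef u
  have hKrep : ∀ lam : ℝ, lam < v x₀ ^ 2 → Kcoef u s x₀ lam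
      = (∑ m ∈ range (s+1), P1 m * (v x₀ ^ 2 - lam) ^ ((-1:ℝ) - m))
        + (s : ℝ) * ((1/(2*lam)) * (cb + ∑ m ∈ range (s+1),
            P2 m * (v x₀ ^ 2 - lam) ^ (-(1/2:ℝ) - m)))
        + ∑ k ∈ Finset.Icc 1 s, (Nat.choose s k : ℝ)
            * ((1/(2*lam)) * (db k + ∑ m ∈ range ((k-1)+1),
                P3 k m * (v x₀ ^ 2 - lam) ^ (-(1/2:ℝ) - m)))
            * (∑ m ∈ range ((s+1-k)+1), P4 k m * (v x₀ ^ 2 - lam) ^ (-(1/2:ℝ) - m)) := by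
    intro lam hlam
    have hx0 : lam < u x₀ ^ 2 := by rw [hux0]; exact hlam
    have hsq : u x₀ ^ 2 = v x₀ ^ 2 := by rw [hux0]
    have R1 : iteratedDeriv s (fun y => 1 / (2 * u y * ((u y) ^ 2 - lam))) x₀
        = ∑ m ∈ range (s+1), P1 m * (v x₀ ^ 2 - lam) ^ ((-1:ℝ) - m) := by
      have hf1 : ∀ y : ℝ, lam < u y ^ 2 → 1 / (2 * u y * ((u y) ^ 2 - lam))
          = 0 + a1 y * ((u y) ^ 2 - lam) ^ ((-1:ℝ)) := by
        intro y hy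
        have hgy : (0:ℝ) < u y ^ 2 - lam := sub_pos.mpr hy
        rw [Real.rpow_neg_one, ha1def, zero_add]
        have h1 : u y ≠ 0 := (hu_pos y).ne'
        have h2 : u y ^ 2 - lam ≠ 0 := ne_of_gt hgy
        field_simp
      have h := repr_lemma (u := u) (f := fun y => 1 / (2 * u y * ((u y) ^ 2 - lam)))
        (a := a1) (b := fun _ : ℝ => (0:ℝ)) (r := (-1:ℝ)) (lam := lam)
        hu_smooth ha1 contDiff_const hf1 s x₀ hx0
      rw [h, iteratedDeriv_zero_fun, hsq]
      simp only [hP1def, hwdef, zero_add]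
    have R2 : iteratedDeriv s
        (fun y => (1 / (2 * lam)) * (((u y) ^ 2 - lam) ^ (-(1 / 2 : ℝ)) - 1 / u y)) x₀
        = (1/(2*lam)) * (cb + ∑ m ∈ range (s+1),
            P2 m * (v x₀ ^ 2 - lam) ^ (-(1/2:ℝ) - m)) := by
      simp only [iteratedDeriv_cmul]
      congr 1
      have hf2 : ∀ y : ℝ, lam < u y ^ 2 → ((u y) ^ 2 - lam) ^ (-(1 / 2 : ℝ)) - 1 / u y
          = b2 y + 1 * ((u y) ^ 2 - lam) ^ (-(1/2:ℝ)) := by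
        intro y hy
        rw [hb2def]
        ring
      have h := repr_lemma (u := u)
        (f := fun y => ((u y) ^ 2 - lam) ^ (-(1 / 2 : ℝ)) - 1 / u y)
        (a := fun _ : ℝ => (1:ℝ)) (b := b2) (r := -(1/2:ℝ)) (lam := lam)
        hu_smooth contDiff_const hb2 hf2 s x₀ hx0
      rw [h, hsq, ← hcbdef]
    have R3 : ∀ k : ℕ, iteratedDeriv (k-1)
        (fun y => (1 / (2 * lam)) * (u y * ((u y) ^ 2 - lam) ^ (-(1 / 2 : ℝ)) - 1)) x₀
        = (1/(2*lam)) * (db k + ∑ m ∈ range ((k-1)+1),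
            P3 k m * (v x₀ ^ 2 - lam) ^ (-(1/2:ℝ) - m)) := by
      intro k
      simp only [iteratedDeriv_cmul]
      congr 1
      have hf3 : ∀ y : ℝ, lam < u y ^ 2 → u y * ((u y) ^ 2 - lam) ^ (-(1 / 2 : ℝ)) - 1
          = (-1) + u y * ((u y) ^ 2 - lam) ^ (-(1/2:ℝ)) := by
        intro y hy
        ring
      have h := repr_lemma (u := u)
        (f := fun y => u y * ((u y) ^ 2 - lam) ^ (-(1 / 2 : ℝ)) - 1)
        (a := u) (b := fun _ : ℝ => (-1:ℝ)) (r := -(1/2:ℝ)) (lam := lam)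
        hu_smooth hu_smooth contDiff_const hf3 (k-1) x₀ hx0
      rw [h, hsq]
    have R4 : ∀ k : ℕ, iteratedDeriv (s+1-k)
        (fun y => ((u y) ^ 2 - lam) ^ (-(1 / 2 : ℝ))) x₀
        = ∑ m ∈ range ((s+1-k)+1), P4 k m * (v x₀ ^ 2 - lam) ^ (-(1/2:ℝ) - m) := by
      intro k
      have hf4 : ∀ y : ℝ, lam < u y ^ 2 → ((u y) ^ 2 - lam) ^ (-(1 / 2 : ℝ))
          = 0 + 1 * ((u y) ^ 2 - lam) ^ (-(1/2:ℝ)) := by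
        intro y hy
        ring
      have h := repr_lemma (u := u)
        (f := fun y => ((u y) ^ 2 - lam) ^ (-(1 / 2 : ℝ)))
        (a := fun _ : ℝ => (1:ℝ)) (b := fun _ : ℝ => (0:ℝ)) (r := -(1/2:ℝ)) (lam := lam)
        hu_smooth contDiff_const contDiff_const hf4 (s+1-k) x₀ hx0
      rw [h, iteratedDeriv_zero_fun, hsq]
      simp only [hP4def, hwdef, zero_add]
    unfold Kcoef
    rw [R1, R2]
    congr 1
    refine Finset.sum_congr rfl fun k _ => ?_
    rw [R3 k, R4 k]
  -- the three limits
  have T1 := tendsto_main_sum (v x₀ ^ 2) s P1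
  have T2 := tendsto_half_sum (v x₀ ^ 2) (ne_of_gt hc0) s (s+1) le_rfl cb (s:ℝ) P2
  have T3 : ∀ k ∈ Finset.Icc 1 s,
      Tendsto (fun lam => (lam - v x₀ ^ 2)^(s+1) * ((Nat.choose s k : ℝ)
          * ((1/(2*lam)) * (db k + ∑ m ∈ range ((k-1)+1),
              P3 k m * (v x₀ ^ 2 - lam) ^ (-(1/2:ℝ) - m)))
          * (∑ m ∈ range ((s+1-k)+1), P4 k m * (v x₀ ^ 2 - lam) ^ (-(1/2:ℝ) - m))))
        (nhdsWithin (v x₀ ^ 2) (Set.Iio (v x₀ ^ 2)))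
        (nhds (((Nat.choose s k : ℝ) * (1/(2*(v x₀ ^ 2))))
          * ((-1:ℝ)^(s+1) * (P3 k (k-1) * P4 k (s+1-k))))) := by
    intro k hk
    have hk1 := (Finset.mem_Icc.mp hk).1
    have hk2 := (Finset.mem_Icc.mp hk).2
    exact tendsto_prod_piece (v x₀ ^ 2) (ne_of_gt hc0) s (k-1) (s+1-k)
      (by omega) (db k) (Nat.choose s k : ℝ) (P3 k) (P4 k)
  have hsum3 := tendsto_finset_sum (Finset.Icc 1 s) T3
  have hall := (T1.add T2).add hsum3
  -- compute the limit value
  have hV : v x₀ ≠ 0 := ne_of_gt hpos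
  have hW : w' x₀ = 2 * v x₀ * deriv v x₀ := by
    rw [hwdef]
    simp only
    rw [hux0, hdux0]
  have hP1s : P1 s = ((-1:ℝ)^s * (s.factorial:ℝ)) * ((1/(2 * v x₀)) * (2*v x₀*deriv v x₀)^s) := by
    simp only [hP1def, Acoef_diag, ha1def]
    rw [prod_neg_one, hW, hux0]
    ring
  have hP3d : ∀ k : ℕ, P3 k (k-1)
      = ((-1:ℝ)^(k-1) * (oddDF (k-1):ℝ)/2^(k-1)) * (v x₀ * (2*v x₀*deriv v x₀)^(k-1)) := by
    intro k
    simp only [hP3def, Acoef_diag]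
    rw [prod_neg_half, hW, hux0]
    ring
  have hP4d : ∀ k : ℕ, P4 k (s+1-k)
      = ((-1:ℝ)^(s+1-k) * (oddDF (s+1-k):ℝ)/2^(s+1-k)) * (2*v x₀*deriv v x₀)^(s+1-k) := by
    intro k
    simp only [hP4def, Acoef_diag]
    rw [prod_neg_half, hW]
    ring
  have hterm : ∀ k ∈ Finset.Icc 1 s,
      ((Nat.choose s k : ℝ) * (1/(2*(v x₀ ^ 2)))) * ((-1:ℝ)^(s+1) * (P3 k (k-1) * P4 k (s+1-k)))
      = (Nat.choose s k : ℝ) * (oddDF (k-1):ℝ) * (oddDF (s+1-k):ℝ)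
          * (-((v x₀)^s * (deriv v x₀)^s / (2 * v x₀))) := by
    intro k hk
    have hk1 := (Finset.mem_Icc.mp hk).1
    have hk2 := (Finset.mem_Icc.mp hk).2
    have e1 : (k-1) + (s+1-k) = s := by omega
    have hsign : (-1:ℝ)^(k-1) * (-1:ℝ)^(s+1-k) = (-1:ℝ)^s := by rw [← pow_add, e1]
    have h2p : (2:ℝ)^(k-1) * (2:ℝ)^(s+1-k) = 2^s := by rw [← pow_add, e1]
    have hWp : (2*v x₀*deriv v x₀)^(k-1) * (2*v x₀*deriv v x₀)^(s+1-k)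
        = (2*v x₀*deriv v x₀)^s := by rw [← pow_add, e1]
    have hneg2 : (-1:ℝ)^(s+1) * (-1:ℝ)^s = -1 := by
      rw [← pow_add]
      exact Odd.neg_one_pow ⟨s, by omega⟩
    rw [hP3d k, hP4d k]
    calc ((Nat.choose s k : ℝ) * (1/(2*(v x₀ ^ 2)))) * ((-1:ℝ)^(s+1)
          * ((((-1:ℝ)^(k-1) * (oddDF (k-1):ℝ)/2^(k-1)) * (v x₀ * (2*v x₀*deriv v x₀)^(k-1)))
            * (((-1:ℝ)^(s+1-k) * (oddDF (s+1-k):ℝ)/2^(s+1-k)) * (2*v x₀*deriv v x₀)^(s+1-k))))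
        = ((Nat.choose s k : ℝ) * (oddDF (k-1):ℝ) * (oddDF (s+1-k):ℝ))
            * (((-1:ℝ)^(s+1) * ((-1:ℝ)^(k-1) * (-1:ℝ)^(s+1-k)))
              * (v x₀ * ((2*v x₀*deriv v x₀)^(k-1) * (2*v x₀*deriv v x₀)^(s+1-k)))
              / (2 * v x₀ ^ 2 * ((2:ℝ)^(k-1) * (2:ℝ)^(s+1-k)))) := by ring
      _ = ((Nat.choose s k : ℝ) * (oddDF (k-1):ℝ) * (oddDF (s+1-k):ℝ))
            * (((-1:ℝ)^(s+1) * (-1:ℝ)^s)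
              * (v x₀ * (2*v x₀*deriv v x₀)^s) / (2 * v x₀ ^ 2 * (2:ℝ)^s)) := by
          rw [hsign, h2p, hWp]
      _ = _ := by
          rw [hneg2, show ((2:ℝ)*v x₀*deriv v x₀)^s = 2^s * (v x₀)^s * (deriv v x₀)^s from by
            rw [show (2:ℝ)*v x₀*deriv v x₀ = (2*v x₀)*(deriv v x₀) from by ring, mul_pow,
              mul_pow]]
          field_simp
  have hLeq : (((-1:ℝ)^(s+1) * P1 s) + 0) + (∑ k ∈ Finset.Icc 1 s,
        ((Nat.choose s k : ℝ) * (1/(2*(v x₀ ^ 2))))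
          * ((-1:ℝ)^(s+1) * (P3 k (k-1) * P4 k (s+1-k))))
      = -(((oddDF (s + 1) : ℝ) / 2 ^ s) * (2 * v x₀) ^ ((s : ℤ) - 1) * (deriv v x₀) ^ s) := by
    rw [Finset.sum_congr rfl hterm, ← Finset.sum_mul, hP1s]
    have hS : ∑ k ∈ Finset.Icc 1 s,
        (Nat.choose s k : ℝ) * (oddDF (k-1):ℝ) * (oddDF (s+1-k):ℝ)
        = (oddDF (s+1):ℝ) - 2^s * (s.factorial:ℝ) := by linarith [keyIdent s]
    rw [hS]
    have hzp : ((2:ℝ) * v x₀) ^ ((s:ℤ) - 1) = (2*v x₀)^s / (2*v x₀) := by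
      rw [zpow_sub_one₀ (by positivity : (2:ℝ) * v x₀ ≠ 0), zpow_natCast, div_eq_mul_inv]
    rw [hzp]
    have h2vp : ((2:ℝ)*v x₀*deriv v x₀)^s = (2*v x₀)^s * (deriv v x₀)^s := by
      rw [show (2:ℝ)*v x₀*deriv v x₀ = (2*v x₀)*(deriv v x₀) from by ring, mul_pow]
    have h2vp2 : ((2:ℝ)*v x₀)^s = 2^s * (v x₀)^s := mul_pow 2 (v x₀) s
    rcases Nat.even_or_odd s with hpar | hpar
    · rw [hpar.neg_one_pow, (hpar.add_one).neg_one_pow, h2vp, h2vp2]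
      field_simp
      ring
    · rw [hpar.neg_one_pow, (hpar.add_one).neg_one_pow, h2vp, h2vp2]
      field_simp
      ring
  rw [← hLeq]
  refine Tendsto.congr' ?_ hall
  filter_upwards [eventually_mem_nhdsWithin] with lam hlam
  rw [hK lam, hKrep lam hlam,
    show ∀ X A B C : ℝ, X*(A+B+C) = X*A + X*B + X*C from fun _ _ _ _ => by ring]
  congr 1
  exact (Finset.mul_sum _ _ _).symm
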